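/- Let 𝔊 be a finite connected symmetric graph without loops and dead ends, with space 𝔓₊ of geodesic rays, transfer operator (ℒf)(e₁,e₂,…) = Σ_{e₀: τ(e₀)=ι(e₁), ι(e₀)≠τ(e₁)} f(e₀,e₁,e₂,…) acting on locally constant functions, and edge Laplacian Δ_𝔈. Then for every z ≠ 0, the eigenspace {ℒ_lc = z} of the transfer operator on locally constant functions is linearly isomorphic to the eigenspace {Δ_𝔈 = z} on ℂ^𝔈. -/

import Mathlib

variable {V : Type*} [Fintype V] [DecidableEq V] (G : SimpleGraph V) [DecidableRel G.Adj]

/-- The set of directed edges of a graph: ordered pairs of adjacent vertices. -/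
abbrev DirEdge := {p : V × V // G.Adj p.1 p.2}

/-- A geodesic ray: an infinite non-backtracking path of directed edges
(`τ(e_j) = ι(e_{j+1})` and `τ(e_{j+1}) ≠ ι(e_j)`). -/
def IsRay (r : ℕ → DirEdge G) : Prop :=
  ∀ n, (r (n + 1)).1.1 = (r n).1.2 ∧ (r (n + 1)).1.2 ≠ (r n).1.1

/-- The space `𝔓₊` of geodesic rays. -/
def RaySp := {r : ℕ → DirEdge G // IsRay G r}

/-- Prepending an edge to a sequence of edges. -/
def cons (e : DirEdge G) (r : ℕ → DirEdge G) : ℕ → DirEdge G :=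
  fun n => Nat.casesOn n e fun k => r k

/-- The transfer operator of the geodesic flow:
`(ℒf)(e₁,e₂,…) = Σ_{e₀ : τ(e₀)=ι(e₁), ι(e₀)≠τ(e₁)} f(e₀,e₁,e₂,…)`. -/
noncomputable def transfer (f : RaySp G → ℂ) (ρ : RaySp G) : ℂ :=
  ∑ e : DirEdge G,
    if h : e.1.2 = (ρ.1 0).1.1 ∧ e.1.1 ≠ (ρ.1 0).1.2 then
      f ⟨cons G e ρ.1, by
        intro n
        cases n with
        | zero => exact ⟨h.1.symm, fun hh => h.2 hh.symm⟩
        | succ k => exact ρ.2 k⟩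
    else 0

/-- A function on the space of geodesic rays is *locally constant* (for the natural
cylinder topology) iff it only depends on finitely many initial edges. -/
def LocConst (f : RaySp G → ℂ) : Prop :=
  ∃ N : ℕ, ∀ ρ ρ' : RaySp G, (∀ n < N, ρ.1 n = ρ'.1 n) → f ρ = f ρ'

lemma transfer_add (f g : RaySp G → ℂ) (ρ : RaySp G) :
    transfer G (f + g) ρ = transfer G f ρ + transfer G g ρ := by
  unfold transfer
  rw [← Finset.sum_add_distrib]
  refine Finset.sum_congr rfl fun e _ => ?_
  by_cases h : e.1.2 = (ρ.1 0).1.1 ∧ e.1.1 ≠ (ρ.1 0).1.2 <;> simp [h] <;> rfl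

lemma transfer_smul (c : ℂ) (f : RaySp G → ℂ) (ρ : RaySp G) :
    transfer G (c • f) ρ = c * transfer G f ρ := by
  unfold transfer
  rw [Finset.mul_sum]
  refine Finset.sum_congr rfl fun e _ => ?_
  by_cases h : e.1.2 = (ρ.1 0).1.1 ∧ e.1.1 ≠ (ρ.1 0).1.2 <;> simp [h] <;> rfl

/-- The eigenspace `{ℒ_lc = z}` of the transfer operator acting on locally constant
functions on the space of geodesic rays. -/
noncomputable def transferEig (z : ℂ) : Submodule ℂ (RaySp G → ℂ) where
  carrier := {f | LocConst G f ∧ ∀ ρ, transfer G f ρ = z * f ρ}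
  add_mem' := by
    rintro f g ⟨⟨N₁, hf⟩, hfe⟩ ⟨⟨N₂, hg⟩, hge⟩
    refine ⟨⟨max N₁ N₂, fun ρ ρ' h => ?_⟩, fun ρ => ?_⟩
    · simp only [Pi.add_apply]
      rw [hf ρ ρ' fun n hn => h n (lt_of_lt_of_le hn (le_max_left _ _)),
        hg ρ ρ' fun n hn => h n (lt_of_lt_of_le hn (le_max_right _ _))]
    · rw [transfer_add, hfe, hge, Pi.add_apply, mul_add]
  zero_mem' := by
    refine ⟨⟨0, fun ρ ρ' _ => rfl⟩, fun ρ => ?_⟩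
    show transfer G 0 ρ = z * 0
    rw [mul_zero]
    exact Finset.sum_eq_zero fun e _ => by split <;> rfl
  smul_mem' := by
    rintro c f ⟨⟨N, hf⟩, hfe⟩
    refine ⟨⟨N, fun ρ ρ' h => ?_⟩, fun ρ => ?_⟩
    · simp only [Pi.smul_apply, smul_eq_mul]
      rw [hf ρ ρ' h]
    · rw [transfer_smul, hfe, Pi.smul_apply, smul_eq_mul]; ring

/-- The edge Laplacian `Δ_𝔈 f (e) = Σ_{e' : ι(e') = τ(e), τ(e') ≠ ι(e)} f e'`. -/
noncomputable def edgeLaplacian : (DirEdge G → ℂ) →ₗ[ℂ] (DirEdge G → ℂ) where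
  toFun f e := ∑ e' ∈ Finset.univ.filter
    (fun e' : DirEdge G => e'.1.1 = e.1.2 ∧ e'.1.2 ≠ e.1.1), f e'
  map_add' f g := by funext e; simp [Finset.sum_add_distrib]
  map_smul' c f := by funext e; simp [Finset.mul_sum]

/-! A locally constant eigenfunction `f` of `ℒ` with `z ≠ 0` satisfies `f = z⁻¹ ℒ f`, and `ℒ`
lowers by one the number of initial edges a function depends on; so `f` depends only on the first
edge of the ray. On such functions `ℒ` is `Δ_𝔈` after reversing that edge, and because every
vertex has degree at least two, every edge starts a ray, which makes the correspondence a
bijection. -/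

def DirEdge.rev : DirEdge G ≃ DirEdge G where
  toFun e := ⟨(e.1.2, e.1.1), e.2.symm⟩
  invFun e := ⟨(e.1.2, e.1.1), e.2.symm⟩
  left_inv _ := rfl
  right_inv _ := rfl

omit [DecidableEq V] in
lemma DirEdge.exists_nonbacktracking_succ (e : DirEdge G) (he : 1 < G.degree e.1.2) :
    ∃ e' : DirEdge G, e'.1.1 = e.1.2 ∧ e'.1.2 ≠ e.1.1 := by
  rw [← G.card_neighborFinset_eq_degree] at he
  obtain ⟨w, hw, hne⟩ := Finset.exists_mem_ne he e.1.1
  exact ⟨⟨(e.1.2, w), (G.mem_neighborFinset _ _).1 hw⟩, rfl, hne⟩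

omit [DecidableEq V] in
lemma RaySp.head_surjective (hdeg : ∀ x : V, 1 < G.degree x) :
    Function.Surjective fun ρ : RaySp G => ρ.1 0 := by
  choose next hnext using fun e => DirEdge.exists_nonbacktracking_succ G e (hdeg _)
  refine fun e => ⟨⟨fun n => next^[n] e, fun n => ?_⟩, rfl⟩
  simpa only [Function.iterate_succ_apply'] using hnext _

def DependsOnInitial (N : ℕ) (f : RaySp G → ℂ) : Prop :=
  ∀ ρ ρ' : RaySp G, (∀ n < N, ρ.1 n = ρ'.1 n) → f ρ = f ρ'

lemma DependsOnInitial.transfer {N : ℕ} {f : RaySp G → ℂ} (hf : DependsOnInitial G (N + 2) f) :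
    DependsOnInitial G (N + 1) (transfer G f) := by
  intro ρ ρ' hρ
  have h0 : ρ.1 0 = ρ'.1 0 := hρ 0 N.succ_pos
  refine Finset.sum_congr rfl fun e _ => ?_
  by_cases hc : e.1.2 = (ρ.1 0).1.1 ∧ e.1.1 ≠ (ρ.1 0).1.2
  · rw [dif_pos hc, dif_pos (h0 ▸ hc)]
    refine hf _ _ fun n hn => ?_
    cases n with
    | zero => rfl
    | succ k => exact hρ k (by omega)
  · rw [dif_neg hc, dif_neg (h0 ▸ hc)]

lemma dependsOnInitial_one_of_mem_transferEig {z : ℂ} (hz : z ≠ 0) {f : RaySp G → ℂ}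
    (hf : f ∈ transferEig G z) : DependsOnInitial G 1 f := by
  obtain ⟨⟨N, hN⟩, heig⟩ := hf
  have hN1 : DependsOnInitial G (N + 1) f := fun ρ ρ' h => hN ρ ρ' fun n hn => h n (by omega)
  clear hN
  induction N with
  | zero => exact hN1
  | succ k ih =>
    refine ih fun ρ ρ' h => mul_left_cancel₀ hz ?_
    rw [← heig, ← heig]
    exact hN1.transfer G ρ ρ' h

/-- Reversing the edge turns the predecessors summed over by `ℒ` into the successors summed
over by `Δ_𝔈`. -/
noncomputable def edgeLift : (DirEdge G → ℂ) →ₗ[ℂ] (RaySp G → ℂ) :=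
  LinearMap.funLeft ℂ ℂ fun ρ => DirEdge.rev G (ρ.1 0)

omit [Fintype V] [DecidableEq V] [DecidableRel G.Adj] in
lemma edgeLift_apply (g : DirEdge G → ℂ) (ρ : RaySp G) :
    edgeLift G g ρ = g (DirEdge.rev G (ρ.1 0)) := rfl

omit [DecidableEq V] in
lemma edgeLift_injective (hdeg : ∀ x : V, 1 < G.degree x) : Function.Injective (edgeLift G) :=
  LinearMap.funLeft_injective_of_surjective _ _ _
    ((DirEdge.rev G).surjective.comp (RaySp.head_surjective G hdeg))

omit [DecidableEq V] in
lemma exists_edgeLift_eq (hdeg : ∀ x : V, 1 < G.degree x) {f : RaySp G → ℂ}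
    (hf : DependsOnInitial G 1 f) : ∃ g, edgeLift G g = f := by
  obtain ⟨ray, hray⟩ := (RaySp.head_surjective G hdeg).hasRightInverse
  refine ⟨fun e => f (ray ((DirEdge.rev G).symm e)), funext fun ρ => hf _ _ fun n hn => ?_⟩
  obtain rfl : n = 0 := by omega
  exact hray _

lemma transfer_edgeLift (g : DirEdge G → ℂ) (ρ : RaySp G) :
    transfer G (edgeLift G g) ρ = edgeLaplacian G g (DirEdge.rev G (ρ.1 0)) := by
  have hsum : transfer G (edgeLift G g) ρ = ∑ e, if e.1.2 = (ρ.1 0).1.1 ∧ e.1.1 ≠ (ρ.1 0).1.2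
      then g (DirEdge.rev G e) else 0 := by
    refine Finset.sum_congr rfl fun e _ => ?_
    by_cases hc : e.1.2 = (ρ.1 0).1.1 ∧ e.1.1 ≠ (ρ.1 0).1.2
    · rw [dif_pos hc, if_pos hc]
      rfl
    · rw [dif_neg hc, if_neg hc]
  rw [hsum]
  exact ((DirEdge.rev G).sum_comp fun e => if e.1.1 = (ρ.1 0).1.1 ∧ e.1.2 ≠ (ρ.1 0).1.2
    then g e else 0).trans (Finset.sum_filter _ _).symm

lemma mem_transferEig_iff {z : ℂ} {f : RaySp G → ℂ} :
    f ∈ transferEig G z ↔ LocConst G f ∧ ∀ ρ, transfer G f ρ = z * f ρ := Iff.rfl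

lemma edgeLift_mem_transferEig_iff (hdeg : ∀ x : V, 1 < G.degree x) {z : ℂ}
    {g : DirEdge G → ℂ} :
    edgeLift G g ∈ transferEig G z ↔ g ∈ Module.End.eigenspace (edgeLaplacian G) z := by
  simp only [mem_transferEig_iff, Module.End.mem_eigenspace_iff, transfer_edgeLift,
    edgeLift_apply, funext_iff, Pi.smul_apply, smul_eq_mul]
  constructor
  · rintro ⟨-, heig⟩ e
    obtain ⟨ρ, hρ⟩ := RaySp.head_surjective G hdeg ((DirEdge.rev G).symm e)
    simpa only [hρ, Equiv.apply_symm_apply] using heig ρ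
  · intro hg
    refine ⟨⟨1, fun ρ ρ' h => by rw [edgeLift_apply, edgeLift_apply, h 0 one_pos]⟩, fun ρ => ?_⟩
    rw [hg]

noncomputable def eigenspaceEquivTransferEig (hdeg : ∀ x : V, 1 < G.degree x) {z : ℂ}
    (hz : z ≠ 0) :
    Module.End.eigenspace (edgeLaplacian G) z ≃ₗ[ℂ] transferEig G z :=
  LinearEquiv.ofBijective
    ((edgeLift G).restrict fun _ hg => (edgeLift_mem_transferEig_iff G hdeg).2 hg)
    ⟨fun _ _ h => Subtype.ext (edgeLift_injective G hdeg (congrArg Subtype.val h)), fun f => by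
      obtain ⟨g, hg⟩ := exists_edgeLift_eq G hdeg (dependsOnInitial_one_of_mem_transferEig G hz f.2)
      exact ⟨⟨g, (edgeLift_mem_transferEig_iff G hdeg).1 (hg ▸ f.2)⟩, Subtype.ext hg⟩⟩

theorem transfer_eigenspace_iso_edge_laplacian_eigenspace
    (hdeg : ∀ x : V, 1 < G.degree x) :
    ∀ z : ℂ, z ≠ 0 →
      Nonempty (↥(transferEig G z) ≃ₗ[ℂ]
        ↥(Module.End.eigenspace (edgeLaplacian G) z)) :=
  fun _ hz => ⟨(eigenspaceEquivTransferEig G hdeg hz).symm⟩
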